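/- Let α, β ∈ ℝ with α + β > 0, R > 0, m an integer with 2|m| < R(α + β), and let κ_m > 0 be the unique positive solution of (α + β) R I_m(κR) K_m(κR) = 1. Then, writing P(x) = I_m(x) K_m(x), the partial derivative of η_m with respect to κ at the point (κ_m, 0) equals (α + β) R² P'(R κ_m), and this quantity is strictly negative. -/

import Mathlib

/-!
At `d = 0` the cross terms cancel, `η_m(κ, 0) = (α + β) R P(κR) - 1`, so the formula is the
chain rule and the sign is that of `P'`. Now `P' < 0` on `(0, ∞)` means
`x I_m'/I_m < -x K_m'/K_m`, and by `I_m' = (I_{m-1} + I_{m+1})/2`, `x (I_{m-1} - I_{m+1}) = 2m I_m`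
and the analogous relations for `K_m` this follows from the Turán inequalities
`I_{m-1} I_{m+1} < I_m²` and `K_m² < K_{m-1} K_{m+1}`, which read
`x I_m'/I_m < √(x² + m²) < -x K_m'/K_m`. Both are monotonicity arguments:
`I_m² - I_{m-1} I_{m+1}` increases from a nonnegative value at `0`, and `K_{m-1} K_{m+1} - K_m²`
decreases to `0` at `∞`. Positivity of `I_n` comes from `(x^(n+1) I_{n+1})' = x^(n+1) I_n` by
induction on `n`.
-/

open MeasureTheory Real Filter Asymptotics Topology

/-- Modified Bessel function of the first kind of integer order `m`. -/
noncomputable def besselI (m : ℤ) (x : ℝ) : ℝ :=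
  (1 / Real.pi) * ∫ θ in (0:ℝ)..Real.pi, Real.exp (x * Real.cos θ) * Real.cos ((m : ℝ) * θ)

/-- Modified Bessel function of the second kind of integer order `m`. -/
noncomputable def besselK (m : ℤ) (x : ℝ) : ℝ :=
  ∫ t in Set.Ioi (0:ℝ), Real.exp (-x * Real.cosh t) * Real.cosh ((m : ℝ) * t)

/-- `ξ_{m,α,d}(κ) = α R_d I_m(κ R_d) K_m(κ R_d) − 1` with `R_d = R + d`. -/
noncomputable def xiA (m : ℤ) (α R d κ : ℝ) : ℝ :=
  α * (R + d) * (besselI m (κ * (R + d)) * besselK m (κ * (R + d))) - 1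

/-- `ξ_{m,β}(κ) = β R I_m(κ R) K_m(κ R) − 1`. -/
noncomputable def xiB (m : ℤ) (β R κ : ℝ) : ℝ :=
  β * R * (besselI m (κ * R) * besselK m (κ * R)) - 1

/-- `ν_m(κ, d) = α β R_d R K_m(κ R_d)² I_m(κ R)²` with `R_d = R + d`. -/
noncomputable def nu (m : ℤ) (α β R κ d : ℝ) : ℝ :=
  α * β * (R + d) * R * (besselK m (κ * (R + d)))^2 * (besselI m (κ * R))^2

/-- `η_m(κ, d) = ν_m(κ, d) − ξ_{m,α,d}(κ) ξ_{m,β}(κ)`. -/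
noncomputable def eta (m : ℤ) (α β R κ d : ℝ) : ℝ :=
  nu m α β R κ d - xiA m α R d κ * xiB m β R κ

open Set

lemma exp_mul_sub_mul_cosh_le (b : ℝ) {x t : ℝ} (hx : 0 < x) (ht : 0 < t) :
    exp (b * t - x * cosh t) ≤ exp (2 * (b + 1) ^ 2 / x) * exp (-t) := by
  have hcosh : t ^ 2 / 8 ≤ cosh t := by
    have h := add_one_le_exp (t / 2)
    have hsq : exp t = exp (t / 2) ^ 2 := by rw [← exp_nat_mul]; ring_nf
    rw [cosh_eq]
    nlinarith [exp_pos (-t), exp_pos (t / 2)]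
  rw [← exp_add, exp_le_exp, ← sub_nonneg]
  have key : 2 * (b + 1) ^ 2 / x + -t - (b * t - x * cosh t)
      = (x * t - 4 * (b + 1)) ^ 2 / (8 * x) + x * (cosh t - t ^ 2 / 8) := by
    field_simp; ring
  rw [key]
  have : 0 ≤ x * (cosh t - t ^ 2 / 8) := mul_nonneg hx.le (by linarith)
  positivity

lemma integrableOn_exp_mul_sub_mul_cosh (b : ℝ) {x : ℝ} (hx : 0 < x) :
    IntegrableOn (fun t => exp (b * t - x * cosh t)) (Ioi 0) := by
  refine Integrable.mono' ((exp_neg_integrableOn_Ioi 0 one_pos).const_mul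
    (exp (2 * (b + 1) ^ 2 / x))) (by fun_prop) ?_
  refine (ae_restrict_iff' measurableSet_Ioi).2 (ae_of_all _ fun t ht => ?_)
  simpa [Real.norm_eq_abs] using exp_mul_sub_mul_cosh_le b hx ht

lemma tendsto_exp_mul_sub_mul_cosh_atTop (b : ℝ) {x : ℝ} (hx : 0 < x) :
    Tendsto (fun t => exp (b * t - x * cosh t)) atTop (𝓝 0) := by
  refine squeeze_zero' (.of_forall fun t => (exp_pos _).le)
    (eventually_gt_atTop 0 |>.mono fun t ht => exp_mul_sub_mul_cosh_le b hx ht) ?_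
  simpa using tendsto_exp_neg_atTop_nhds_zero.const_mul (exp (2 * (b + 1) ^ 2 / x))

lemma abs_sinh_le_cosh (y : ℝ) : |sinh y| ≤ cosh y := by
  rw [abs_le]
  constructor <;> linarith [sinh_lt_cosh y, sinh_lt_cosh (-y), sinh_neg y, cosh_neg y]

lemma cosh_le_exp_abs (y : ℝ) : cosh y ≤ exp |y| := by
  rw [← cosh_abs, cosh_eq]
  linarith [exp_le_exp.2 (neg_le_self (abs_nonneg y))]

lemma exp_neg_mul_cosh_mul_cosh_le (ν x : ℝ) {t : ℝ} (ht : 0 ≤ t) :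
    exp (-x * cosh t) * cosh (ν * t) ≤ exp (|ν| * t - x * cosh t) := by
  rw [sub_eq_neg_add, exp_add, neg_mul]
  gcongr
  simpa [abs_mul, abs_of_nonneg ht] using cosh_le_exp_abs (ν * t)

lemma integrableOn_exp_neg_mul_cosh_mul_cosh (ν : ℝ) {x : ℝ} (hx : 0 < x) :
    IntegrableOn (fun t => exp (-x * cosh t) * cosh (ν * t)) (Ioi 0) := by
  refine Integrable.mono' (integrableOn_exp_mul_sub_mul_cosh |ν| hx) (by fun_prop) ?_
  refine (ae_restrict_iff' measurableSet_Ioi).2 (ae_of_all _ fun t ht => ?_)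
  rw [Real.norm_eq_abs, abs_of_pos (by positivity)]
  exact exp_neg_mul_cosh_mul_cosh_le ν x (le_of_lt ht)

lemma cosh_mul_cosh_mul (ν t : ℝ) :
    cosh t * cosh (ν * t) = (cosh ((ν + 1) * t) + cosh ((ν - 1) * t)) / 2 := by
  rw [add_mul, sub_mul, one_mul, cosh_add, cosh_sub]; ring

lemma sinh_mul_sinh_mul (ν t : ℝ) :
    sinh t * sinh (ν * t) = (cosh ((ν + 1) * t) - cosh ((ν - 1) * t)) / 2 := by
  rw [add_mul, sub_mul, one_mul, cosh_add, cosh_sub]; ring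

lemma cos_mul_cos_mul (ν θ : ℝ) :
    cos θ * cos (ν * θ) = (cos ((ν + 1) * θ) + cos ((ν - 1) * θ)) / 2 := by
  rw [add_mul, sub_mul, one_mul, cos_add, cos_sub]; ring

lemma sin_mul_sin_mul (ν θ : ℝ) :
    sin θ * sin (ν * θ) = (cos ((ν - 1) * θ) - cos ((ν + 1) * θ)) / 2 := by
  rw [add_mul, sub_mul, one_mul, cos_add, cos_sub]; ring

lemma pos_of_strictAntiOn_of_tendsto {f : ℝ → ℝ} {a x : ℝ} (hf : StrictAntiOn f (Ioi a))
    (hlim : Tendsto f atTop (𝓝 0)) (hx : a < x) : 0 < f x := by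
  have hle : ∀ᶠ y in atTop, f y ≤ f (x + 1) := by
    filter_upwards [eventually_ge_atTop (x + 1)] with y hy
    exact hf.antitoneOn (by simp; linarith) (by simp; linarith) hy
  exact (le_of_tendsto hlim hle).trans_lt (hf hx (by simp; linarith) (by linarith))

lemma besselK_pos (m : ℤ) {x : ℝ} (hx : 0 < x) : 0 < besselK m x := by
  have hpos : ∀ t, 0 < exp (-x * cosh t) * cosh (m * t) := fun t => by positivity
  rw [besselK, setIntegral_pos_iff_support_of_nonneg_ae (ae_of_all _ fun t => (hpos t).le)
    (integrableOn_exp_neg_mul_cosh_mul_cosh _ hx),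
    inter_eq_right.2 fun t _ => Function.mem_support.2 (hpos t).ne']
  simp

lemma cosh_mul_exp_neg_mul_cosh_mul_cosh (ν x t : ℝ) :
    cosh t * (exp (-x * cosh t) * cosh (ν * t)) =
      (exp (-x * cosh t) * cosh ((ν + 1) * t) + exp (-x * cosh t) * cosh ((ν - 1) * t)) / 2 := by
  rw [mul_left_comm, cosh_mul_cosh_mul]; ring

lemma integrableOn_cosh_mul_exp_neg_mul_cosh_mul_cosh (ν : ℝ) {x : ℝ} (hx : 0 < x) :
    IntegrableOn (fun t => cosh t * (exp (-x * cosh t) * cosh (ν * t))) (Ioi 0) := by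
  simp_rw [cosh_mul_exp_neg_mul_cosh_mul_cosh]
  exact ((integrableOn_exp_neg_mul_cosh_mul_cosh _ hx).add
    (integrableOn_exp_neg_mul_cosh_mul_cosh _ hx)).div_const 2

lemma integral_cosh_mul_exp_neg_mul_cosh_mul_cosh (m : ℤ) {x : ℝ} (hx : 0 < x) :
    ∫ t in Ioi 0, cosh t * (exp (-x * cosh t) * cosh (m * t)) =
      (besselK (m + 1) x + besselK (m - 1) x) / 2 := by
  simp_rw [cosh_mul_exp_neg_mul_cosh_mul_cosh]
  rw [integral_div, integral_add (integrableOn_exp_neg_mul_cosh_mul_cosh _ hx)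
    (integrableOn_exp_neg_mul_cosh_mul_cosh _ hx)]
  simp [besselK]

lemma hasDerivAt_besselK (m : ℤ) {x : ℝ} (hx : 0 < x) :
    HasDerivAt (besselK m) (-(besselK (m - 1) x + besselK (m + 1) x) / 2) x := by
  have hbound : ∀ t, ∀ y ∈ Metric.ball x (x / 2),
      ‖-(cosh t * (exp (-y * cosh t) * cosh (m * t)))‖ ≤
        cosh t * (exp (-(x / 2) * cosh t) * cosh (m * t)) := by
    intro t y hy
    have hy : x / 2 ≤ y := by
      rw [Metric.mem_ball, Real.dist_eq, abs_lt] at hy; linarith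
    rw [norm_neg, Real.norm_eq_abs, abs_of_pos (by positivity)]
    gcongr
  have hderiv : ∀ t y, HasDerivAt (fun y => exp (-y * cosh t) * cosh (m * t))
      (-(cosh t * (exp (-y * cosh t) * cosh (m * t)))) y := fun t y =>
    (((hasDerivAt_neg y).mul_const (cosh t)).exp.mul_const _).congr_deriv (by ring)
  have h := (hasDerivAt_integral_of_dominated_loc_of_deriv_le (μ := volume.restrict (Ioi 0))
    (F := fun y t => exp (-y * cosh t) * cosh (m * t))
    (Metric.ball_mem_nhds x (half_pos hx)) (.of_forall fun y => by fun_prop)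
    (integrableOn_exp_neg_mul_cosh_mul_cosh _ hx) (by fun_prop) (ae_of_all _ hbound)
    (integrableOn_cosh_mul_exp_neg_mul_cosh_mul_cosh _ (half_pos hx))
    (ae_of_all _ fun t y _ => hderiv t y)).2
  rw [integral_neg, integral_cosh_mul_exp_neg_mul_cosh_mul_cosh m hx] at h
  exact h.congr_deriv (by ring)

lemma besselK_recurrence (m : ℤ) {x : ℝ} (hx : 0 < x) :
    x * (besselK (m + 1) x - besselK (m - 1) x) = 2 * m * besselK m x := by
  set g : ℝ → ℝ → ℝ := fun ν t => exp (-x * cosh t) * cosh (ν * t)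
  have hg : ∀ ν : ℝ, IntegrableOn (g ν) (Ioi 0) :=
    fun ν => integrableOn_exp_neg_mul_cosh_mul_cosh ν hx
  have hderiv : ∀ t, HasDerivAt (fun t => sinh (m * t) * exp (-x * cosh t))
      (m * g m t - x / 2 * (g (m + 1) t - g (m - 1) t)) t := by
    intro t
    have h := (((hasDerivAt_id t).const_mul (m : ℝ)).sinh).mul
      ((hasDerivAt_cosh t).const_mul (-x)).exp
    refine h.congr_deriv ?_
    simp only [g, id, mul_one]
    linear_combination (-x * exp (-x * cosh t)) * sinh_mul_sinh_mul m t
  have hlim : Tendsto (fun t => sinh (m * t) * exp (-x * cosh t)) atTop (𝓝 0) := by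
    refine squeeze_zero_norm' ?_ (tendsto_exp_mul_sub_mul_cosh_atTop |(m : ℝ)| hx)
    filter_upwards [eventually_ge_atTop 0] with t ht
    rw [Real.norm_eq_abs, abs_mul, abs_of_pos (exp_pos _), mul_comm]
    calc exp (-x * cosh t) * |sinh (m * t)| ≤ exp (-x * cosh t) * cosh (m * t) := by
          gcongr; exact abs_sinh_le_cosh _
      _ ≤ _ := exp_neg_mul_cosh_mul_cosh_le _ x ht
  have hm : IntegrableOn (fun t => m * g m t) (Ioi 0) := (hg _).const_mul _
  have hpm : IntegrableOn (fun t => x / 2 * (g (m + 1) t - g (m - 1) t)) (Ioi 0) :=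
    ((hg _).sub (hg _)).const_mul _
  have h := integral_Ioi_of_hasDerivAt_of_tendsto (by fun_prop) (fun t _ => hderiv t)
    (hm.sub hpm) hlim
  rw [integral_sub hm hpm, integral_const_mul, integral_const_mul,
    integral_sub (hg _) (hg _)] at h
  simp only [g, besselK, Int.cast_add, Int.cast_sub, Int.cast_one, mul_zero, sinh_zero,
    zero_mul, sub_zero] at h ⊢
  linear_combination -2 * h

lemma besselK_le_exp_mul_besselK_one (m : ℤ) {x : ℝ} (hx : 1 ≤ x) :
    besselK m x ≤ exp (1 - x) * besselK m 1 := by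
  rw [besselK, besselK, ← integral_const_mul]
  refine setIntegral_mono_on (integrableOn_exp_neg_mul_cosh_mul_cosh _ (by linarith))
    ((integrableOn_exp_neg_mul_cosh_mul_cosh _ one_pos).const_mul _) measurableSet_Ioi
    fun t _ => ?_
  rw [← mul_assoc, ← exp_add]
  gcongr
  nlinarith [one_le_cosh t]

lemma tendsto_besselK_atTop (m : ℤ) : Tendsto (besselK m) atTop (𝓝 0) := by
  refine squeeze_zero' (eventually_gt_atTop 0 |>.mono fun x hx => (besselK_pos m hx).le)
    (eventually_ge_atTop 1 |>.mono fun x hx => besselK_le_exp_mul_besselK_one m hx) ?_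
  simpa [sub_eq_add_neg] using ((tendsto_exp_atBot.comp
    (tendsto_atBot_add_const_left _ 1 tendsto_neg_atTop_atBot)).mul_const (besselK m 1))

lemma besselK_turan (m : ℤ) {x : ℝ} (hx : 0 < x) :
    besselK m x ^ 2 < besselK (m - 1) x * besselK (m + 1) x := by
  set S : ℝ → ℝ := fun y => besselK (m - 1) y * besselK (m + 1) y - besselK m y ^ 2
  have hS : ∀ y, 0 < y → HasDerivAt S (-2 * (besselK (m - 1) y * besselK (m + 1) y) / y) y := by
    intro y hy
    have h := ((hasDerivAt_besselK (m - 1) hy).mul (hasDerivAt_besselK (m + 1) hy)).sub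
      ((hasDerivAt_besselK m hy).pow 2)
    refine h.congr_deriv ?_
    have hlo := besselK_recurrence (m - 1) hy
    have hhi := besselK_recurrence (m + 1) hy
    simp only [sub_add_cancel, add_sub_cancel_right, Int.cast_add, Int.cast_sub,
      Int.cast_one] at hlo hhi ⊢
    rw [eq_div_iff hy.ne']
    linear_combination (besselK (m + 1) y / 2) * hlo - (besselK (m - 1) y / 2) * hhi
  have hanti : StrictAntiOn S (Ioi 0) := by
    refine strictAntiOn_of_deriv_neg (convex_Ioi 0)
      (fun y hy => (hS y hy).continuousAt.continuousWithinAt) fun y hy => ?_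
    rw [interior_Ioi] at hy
    rw [(hS y hy).deriv]
    exact div_neg_of_neg_of_pos
      (by linarith [mul_pos (besselK_pos (m - 1) hy) (besselK_pos (m + 1) hy)]) hy
  have hlim : Tendsto S atTop (𝓝 0) := by
    simpa using ((tendsto_besselK_atTop (m - 1)).mul (tendsto_besselK_atTop (m + 1))).sub
      ((tendsto_besselK_atTop m).pow 2)
  linarith [pos_of_strictAntiOn_of_tendsto hanti hlim hx]

lemma intervalIntegrable_exp_mul_cos_mul_cos (ν x a b : ℝ) :
    IntervalIntegrable (fun θ => exp (x * cos θ) * cos (ν * θ)) volume a b :=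
  Continuous.intervalIntegrable (by fun_prop) a b

lemma integral_exp_mul_cos_mul_cos_mul_cos (m : ℤ) (x : ℝ) :
    ∫ θ in 0..π, exp (x * cos θ) * cos θ * cos (m * θ) =
      π * ((besselI (m + 1) x + besselI (m - 1) x) / 2) := by
  have h : ∀ θ, exp (x * cos θ) * cos θ * cos (m * θ) =
      (exp (x * cos θ) * cos ((m + 1) * θ) + exp (x * cos θ) * cos ((m - 1) * θ)) / 2 := by
    intro θ; rw [mul_assoc, cos_mul_cos_mul]; ring
  simp_rw [h]
  rw [intervalIntegral.integral_div, intervalIntegral.integral_add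
    (intervalIntegrable_exp_mul_cos_mul_cos _ x _ _)
    (intervalIntegrable_exp_mul_cos_mul_cos _ x _ _)]
  simp only [besselI, Int.cast_add, Int.cast_sub, Int.cast_one]
  field_simp

lemma hasDerivAt_besselI (m : ℤ) (x : ℝ) :
    HasDerivAt (besselI m) ((besselI (m - 1) x + besselI (m + 1) x) / 2) x := by
  have hbound : ∀ θ, ∀ y ∈ Metric.ball x 1,
      ‖exp (y * cos θ) * cos θ * cos (m * θ)‖ ≤ exp (|x| + 1) := by
    intro θ y hy
    rw [Metric.mem_ball, Real.dist_eq] at hy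
    have hy' : y * cos θ ≤ |x| + 1 := by
      calc y * cos θ ≤ |y * cos θ| := le_abs_self _
        _ ≤ |y| := by
          rw [abs_mul]; exact mul_le_of_le_one_right (abs_nonneg y) (abs_cos_le_one θ)
        _ ≤ |x| + 1 := by linarith [abs_sub_abs_le_abs_sub y x]
    rw [norm_mul, norm_mul, Real.norm_eq_abs, Real.norm_eq_abs, Real.norm_eq_abs, abs_exp]
    calc exp (y * cos θ) * |cos θ| * |cos (m * θ)| ≤ exp (y * cos θ) * 1 * 1 := by
          gcongr <;> exact abs_cos_le_one _
      _ ≤ exp (|x| + 1) := by simpa using hy'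
  have h := (intervalIntegral.hasDerivAt_integral_of_dominated_loc_of_deriv_le
    (F := fun y θ => exp (y * cos θ) * cos (m * θ)) (a := 0) (b := π)
    (Metric.ball_mem_nhds x one_pos) (.of_forall fun y => by fun_prop)
    (intervalIntegrable_exp_mul_cos_mul_cos _ x _ _) (by fun_prop)
    (ae_of_all _ fun θ _ => hbound θ) (intervalIntegrable_const (μ := volume))
    (ae_of_all _ fun θ _ y _ =>
      (((hasDerivAt_id y).mul_const (cos θ)).exp.mul_const _).congr_deriv (by simp))).2
  rw [integral_exp_mul_cos_mul_cos_mul_cos] at h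
  have hπ : π ≠ 0 := pi_ne_zero
  refine (h.const_mul (1 / π)).congr_deriv ?_
  field_simp
  ring

lemma continuous_besselI (m : ℤ) : Continuous (besselI m) :=
  continuous_iff_continuousAt.2 fun x => (hasDerivAt_besselI m x).continuousAt

lemma besselI_recurrence (m : ℤ) (x : ℝ) :
    x * (besselI (m - 1) x - besselI (m + 1) x) = 2 * m * besselI m x := by
  set g : ℝ → ℝ → ℝ := fun ν θ => exp (x * cos θ) * cos (ν * θ)
  -- the integral of `(sin (m θ) exp (x cos θ))'` over `[0, π]` vanishes because `m ∈ ℤ`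
  have hderiv : ∀ θ, HasDerivAt (fun θ => sin (m * θ) * exp (x * cos θ))
      (m * g m θ - x / 2 * (g (m - 1) θ - g (m + 1) θ)) θ := by
    intro θ
    have h := (((hasDerivAt_id θ).const_mul (m : ℝ)).sin).mul
      ((hasDerivAt_cos θ).const_mul x).exp
    refine h.congr_deriv ?_
    simp only [g, id, mul_one]
    linear_combination (-x * exp (x * cos θ)) * sin_mul_sin_mul m θ
  have hg : ∀ ν, IntervalIntegrable (g ν) volume 0 π :=
    fun ν => intervalIntegrable_exp_mul_cos_mul_cos ν x 0 π
  have hm : IntervalIntegrable (fun θ => m * g m θ) volume 0 π := (hg _).const_mul _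
  have hpm : IntervalIntegrable (fun θ => x / 2 * (g (m - 1) θ - g (m + 1) θ)) volume 0 π :=
    ((hg _).sub (hg _)).const_mul _
  have h := intervalIntegral.integral_eq_sub_of_hasDerivAt (fun θ _ => hderiv θ) (hm.sub hpm)
  rw [intervalIntegral.integral_sub hm hpm, intervalIntegral.integral_const_mul,
    intervalIntegral.integral_const_mul, intervalIntegral.integral_sub (hg _) (hg _)] at h
  simp only [g, sin_int_mul_pi, mul_zero, sin_zero, zero_mul, sub_zero] at h
  simp only [besselI, Int.cast_add, Int.cast_sub, Int.cast_one]
  have hπ : π ≠ 0 := pi_ne_zero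
  field_simp
  linear_combination -2 * h

lemma besselI_neg (m : ℤ) : besselI (-m) = besselI m := by
  ext x
  simp [besselI, neg_mul, cos_neg]

lemma besselI_zero_right {m : ℤ} (hm : m ≠ 0) : besselI m 0 = 0 := by
  have hm' : (m : ℝ) ≠ 0 := Int.cast_ne_zero.2 hm
  simp [besselI, intervalIntegral.integral_comp_mul_left (fun θ => cos θ) hm', integral_cos,
    sin_int_mul_pi]

lemma besselI_zero_pos (x : ℝ) : 0 < besselI 0 x := by
  have h : 0 < ∫ θ in 0..π, exp (x * cos θ) * cos ((0 : ℤ) * θ) :=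
    intervalIntegral.intervalIntegral_pos_of_pos_on
      (intervalIntegrable_exp_mul_cos_mul_cos _ x _ _) (fun θ _ => by simp [exp_pos])
      pi_pos
  exact mul_pos (by positivity) h

lemma hasDerivAt_pow_mul_besselI (n : ℕ) (x : ℝ) :
    HasDerivAt (fun y => y ^ (n + 1) * besselI (n + 1) y) (x ^ (n + 1) * besselI n x) x := by
  refine ((hasDerivAt_pow (n + 1) x).mul (hasDerivAt_besselI (n + 1) x)).congr_deriv ?_
  have h := besselI_recurrence (n + 1) x
  simp only [add_sub_cancel_right, Nat.add_sub_cancel, Int.cast_add, Int.cast_natCast,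
    Int.cast_one, Nat.cast_add, Nat.cast_one] at h ⊢
  linear_combination (-x ^ n / 2) * h

lemma besselI_natCast_pos (n : ℕ) {x : ℝ} (hx : 0 < x) : 0 < besselI n x := by
  induction n generalizing x with
  | zero => exact besselI_zero_pos x
  | succ n ih =>
    have hmono : StrictMonoOn (fun y => y ^ (n + 1) * besselI (n + 1) y) (Ici 0) := by
      refine strictMonoOn_of_deriv_pos (convex_Ici 0)
        (by have := continuous_besselI (n + 1); fun_prop) fun y hy => ?_
      rw [interior_Ici] at hy
      rw [(hasDerivAt_pow_mul_besselI n y).deriv]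
      exact mul_pos (pow_pos hy _) (ih hy)
    have h := hmono self_mem_Ici hx.le hx
    simp only [ne_eq, Nat.add_eq_zero_iff, one_ne_zero, and_false, not_false_eq_true,
      zero_pow, zero_mul] at h
    push_cast
    exact pos_of_mul_pos_right h (pow_pos hx _).le

lemma besselI_pos (m : ℤ) {x : ℝ} (hx : 0 < x) : 0 < besselI m x := by
  rcases Int.natAbs_eq m with h | h <;> rw [h]
  · exact besselI_natCast_pos _ hx
  · rw [besselI_neg]; exact besselI_natCast_pos _ hx

lemma besselI_turan (m : ℤ) {x : ℝ} (hx : 0 < x) :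
    besselI (m - 1) x * besselI (m + 1) x < besselI m x ^ 2 := by
  set T : ℝ → ℝ := fun y => besselI m y ^ 2 - besselI (m - 1) y * besselI (m + 1) y
  have hT : ∀ y, 0 < y → HasDerivAt T (2 * (besselI (m - 1) y * besselI (m + 1) y) / y) y := by
    intro y hy
    have h := ((hasDerivAt_besselI m y).pow 2).sub
      ((hasDerivAt_besselI (m - 1) y).mul (hasDerivAt_besselI (m + 1) y))
    refine h.congr_deriv ?_
    have hlo := besselI_recurrence (m - 1) y
    have hhi := besselI_recurrence (m + 1) y
    simp only [sub_add_cancel, add_sub_cancel_right, Int.cast_add, Int.cast_sub,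
      Int.cast_one] at hlo hhi ⊢
    rw [eq_div_iff hy.ne']
    linear_combination (-besselI (m + 1) y / 2) * hlo + (besselI (m - 1) y / 2) * hhi
  have hmono : StrictMonoOn T (Ici 0) := by
    refine strictMonoOn_of_deriv_pos (convex_Ici 0)
      (by have := continuous_besselI; fun_prop) fun y hy => ?_
    rw [interior_Ici] at hy
    rw [(hT y hy).deriv]
    exact div_pos (mul_pos two_pos (mul_pos (besselI_pos (m - 1) hy) (besselI_pos (m + 1) hy))) hy
  have hT0 : 0 ≤ T 0 := by
    have : besselI (m - 1) 0 * besselI (m + 1) 0 = 0 := by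
      rcases eq_or_ne (m + 1) 0 with h | h
      · rw [besselI_zero_right (by omega : m - 1 ≠ 0), zero_mul]
      · rw [besselI_zero_right h, mul_zero]
    simp only [T, this, sub_zero]
    positivity
  linarith [hT0.trans_lt (hmono self_mem_Ici hx.le hx)]

lemma hasDerivAt_besselI_mul_besselK (m : ℤ) {x : ℝ} (hx : 0 < x) :
    HasDerivAt (fun y => besselI m y * besselK m y)
      ((besselI (m - 1) x + besselI (m + 1) x) / 2 * besselK m x
        + besselI m x * (-(besselK (m - 1) x + besselK (m + 1) x) / 2)) x :=
  (hasDerivAt_besselI m x).mul (hasDerivAt_besselK m hx)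

lemma sq_mul_sq_deriv_besselI_lt (m : ℤ) {x : ℝ} (hx : 0 < x) :
    x ^ 2 * ((besselI (m - 1) x + besselI (m + 1) x) / 2) ^ 2 <
      (x ^ 2 + m ^ 2) * besselI m x ^ 2 := by
  have h := mul_lt_mul_of_pos_left (besselI_turan m hx) (pow_pos hx 2)
  linear_combination h + (x * (besselI (m - 1) x - besselI (m + 1) x) + 2 * m * besselI m x) / 4 *
    besselI_recurrence m x

lemma sq_mul_sq_besselK_lt (m : ℤ) {x : ℝ} (hx : 0 < x) :
    (x ^ 2 + m ^ 2) * besselK m x ^ 2 <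
      x ^ 2 * ((besselK (m - 1) x + besselK (m + 1) x) / 2) ^ 2 := by
  have h := mul_lt_mul_of_pos_left (besselK_turan m hx) (pow_pos hx 2)
  linear_combination h - (x * (besselK (m + 1) x - besselK (m - 1) x) + 2 * m * besselK m x) / 4 *
    besselK_recurrence m hx

lemma deriv_besselI_mul_besselK_neg (m : ℤ) {x : ℝ} (hx : 0 < x) :
    deriv (fun y => besselI m y * besselK m y) x < 0 := by
  rw [(hasDerivAt_besselI_mul_besselK m hx).deriv, neg_div, mul_neg, ← sub_eq_add_neg, sub_neg]
  set dI := (besselI (m - 1) x + besselI (m + 1) x) / 2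
  set dK := (besselK (m - 1) x + besselK (m + 1) x) / 2
  have hI := besselI_pos m hx
  have hK := besselK_pos m hx
  have hdK : 0 < dK := by
    have := besselK_pos (m - 1) hx; have := besselK_pos (m + 1) hx; positivity
  have hsq : x ^ 2 * (dI * besselK m x) ^ 2 < x ^ 2 * (besselI m x * dK) ^ 2 :=
    calc x ^ 2 * (dI * besselK m x) ^ 2 = x ^ 2 * dI ^ 2 * besselK m x ^ 2 := by ring
      _ < (x ^ 2 + m ^ 2) * besselI m x ^ 2 * besselK m x ^ 2 :=
        mul_lt_mul_of_pos_right (sq_mul_sq_deriv_besselI_lt m hx) (pow_pos hK 2)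
      _ = besselI m x ^ 2 * ((x ^ 2 + m ^ 2) * besselK m x ^ 2) := by ring
      _ < besselI m x ^ 2 * (x ^ 2 * dK ^ 2) :=
        mul_lt_mul_of_pos_left (sq_mul_sq_besselK_lt m hx) (pow_pos hI 2)
      _ = x ^ 2 * (besselI m x * dK) ^ 2 := by ring
  exact (abs_lt_of_sq_lt_sq' (lt_of_mul_lt_mul_left hsq (sq_nonneg x)) (by positivity)).2

lemma eta_zero_eq (m : ℤ) (α β R : ℝ) :
    (fun κ => eta m α β R κ 0) =
      fun κ => (α + β) * R * (besselI m (κ * R) * besselK m (κ * R)) - 1 := by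
  ext κ
  simp only [eta, nu, xiA, xiB, add_zero]
  ring

theorem eta_deriv_kappa_general (α β R : ℝ) (m : ℤ)
    (hγ : 0 < α + β) (hR : 0 < R)
    (κm : ℝ) (hκm : 0 < κm) :
    deriv (fun κ => eta m α β R κ 0) κm
      = (α + β) * R^2 * deriv (fun x => besselI m x * besselK m x) (R * κm) ∧
    deriv (fun κ => eta m α β R κ 0) κm < 0 := by
  have hx : 0 < R * κm := mul_pos hR hκm
  have hP : HasDerivAt (fun x => besselI m x * besselK m x)
      (deriv (fun x => besselI m x * besselK m x) (R * κm)) (κm * R) := by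
    rw [mul_comm κm R]
    exact (hasDerivAt_besselI_mul_besselK m hx).differentiableAt.hasDerivAt
  have hη : HasDerivAt (fun κ => eta m α β R κ 0)
      ((α + β) * R ^ 2 * deriv (fun x => besselI m x * besselK m x) (R * κm)) κm := by
    rw [eta_zero_eq]
    exact (((hP.comp κm ((hasDerivAt_id κm).mul_const R)).const_mul ((α + β) * R)).sub_const 1
      ).congr_deriv (by simp only [one_mul]; ring)
  rw [hη.deriv]
  exact ⟨rfl, mul_neg_of_pos_of_neg (by positivity) (deriv_besselI_mul_besselK_neg m hx)⟩

/-- the partial derivative `∂η_m/∂κ` at `(κ_m, 0)` equals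
`(α + β) R² P'(R κ_m)` and is strictly negative. -/
theorem eta_deriv_kappa (α β R : ℝ) (m : ℤ)
    (hγ : 0 < α + β) (hR : 0 < R) (hm : 2 * |(m : ℝ)| < R * (α + β))
    (κm : ℝ) (hκm : 0 < κm)
    (heq : (α + β) * R * (besselI m (κm * R) * besselK m (κm * R)) = 1)
    (huniq : ∀ κ > (0:ℝ),
      (α + β) * R * (besselI m (κ * R) * besselK m (κ * R)) = 1 → κ = κm) :
    deriv (fun κ => eta m α β R κ 0) κm
      = (α + β) * R^2 * deriv (fun x => besselI m x * besselK m x) (R * κm) ∧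
    deriv (fun κ => eta m α β R κ 0) κm < 0 :=
  eta_deriv_kappa_general α β R m hγ hR κm hκm
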